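/- arXiv:1407.8353 — 3 statements merged into one kernel-verified Lean document; each statement's English description precedes it below -/
import Mathlib

section
/- (Splitting representation for a pair of transition probabilities.) Let (E, 𝓔) be a countably generated measurable space and let P(x, dy) be a Markov kernel on (E, 𝓔). Then there exist a measurable function p : E × E → [0, 1] and Markov kernels Θ, Σ₁, Σ₂ from E × E to E such that for every (x₁, x₂) ∈ E × E and i = 1, 2: P(xᵢ, dy) = p(x₁, x₂) Θ(x₁, x₂; dy) + (1 − p(x₁, x₂)) Σᵢ(x₁, x₂; dy), where p(x₁, x₂) = 1 − (1/2)‖P(x₁,·) − P(x₂,·)‖ and Σᵢ(x₁, x₂; ·) is absolutely continuous with respect to P(xᵢ, ·). -/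
/-!
Put `ν = P(x₁,·) + P(x₂,·)` and let `fᵢ` be the density of `P(xᵢ,·)` with respect to `ν`. The
measure with density `min f₁ f₂` is the common part of the two laws, and the remainders, with
densities `f₁ - f₂` and `f₂ - f₁` (truncated at `0`), are mutually singular; hence each remainder
has mass `½‖P(x₁,·) - P(x₂,·)‖`. Normalising the three pieces gives `Θ, Σ₁, Σ₂`. Taking the
densities from the kernel Radon–Nikodym derivative, which is where the countably generated
σ-algebra is needed, makes everything measurable in `(x₁, x₂)`.
-/

open MeasureTheory ProbabilityTheory Filter ENNReal

/-- The total variation distance `‖μ - ν‖` between two (probability) measures,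
with values in `[0,2]`: `‖μ - ν‖ = 2 ⨆_{A measurable} |μ A - ν A|`. -/
noncomputable def tvDist {E : Type*} [MeasurableSpace E] (μ ν : Measure E) : ℝ≥0∞ :=
  2 * ⨆ (A : Set E) (_ : MeasurableSet A), ((μ A - ν A) ⊔ (ν A - μ A))

/-- The `n`-step transition kernel `P_n` of a Markov kernel `P`. -/
noncomputable def nStep {E : Type*} [MeasurableSpace E] (P : ProbabilityTheory.Kernel E E) :
    ℕ → ProbabilityTheory.Kernel E E
  | 0 => ProbabilityTheory.Kernel.id
  | n + 1 => (nStep P n) ∘ₖ P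

namespace MeasureTheory

variable {β : Type*} {mβ : MeasurableSpace β} {μ μ₁ μ₂ m d₁ d₂ : Measure β}

lemma withDensity_min_add_withDensity_tsub {f g : β → ℝ≥0∞} (hf : Measurable f)
    (hg : Measurable g) :
    μ.withDensity (f ⊓ g) + μ.withDensity (f - g) = μ.withDensity f := by
  rw [← withDensity_add_left (hf.inf hg), add_comm]
  congr 1
  ext b
  exact tsub_add_min

lemma withDensity_tsub_mutuallySingular {f g : β → ℝ≥0∞} (hf : Measurable f)
    (hg : Measurable g) :
    μ.withDensity (f - g) ⟂ₘ μ.withDensity (g - f) := by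
  refine ⟨{b | f b ≤ g b}, measurableSet_le hf hg, ?_, ?_⟩
  · rw [withDensity_apply _ (measurableSet_le hf hg)]
    exact setLIntegral_eq_zero (measurableSet_le hf hg) fun b hb => tsub_eq_zero_of_le hb
  · rw [withDensity_apply _ (measurableSet_le hf hg).compl]
    exact setLIntegral_eq_zero (measurableSet_le hf hg).compl
      fun b (hb : ¬ f b ≤ g b) => tsub_eq_zero_of_le (not_le.mp hb).le

lemma iSup_measure_tsub_eq [IsFiniteMeasure m] (h₁ : μ₁ = m + d₁) (h₂ : μ₂ = m + d₂)
    (hd : d₁ ⟂ₘ d₂) :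
    ⨆ (A : Set β) (_ : MeasurableSet A), (μ₁ A - μ₂ A) = d₁ Set.univ := by
  subst h₁ h₂
  refine le_antisymm (iSup₂_le fun A _ => ?_) ?_
  · calc (m + d₁) A - (m + d₂) A = d₁ A - d₂ A :=
          ENNReal.add_sub_add_eq_sub_left (measure_ne_top m A)
      _ ≤ d₁ Set.univ := tsub_le_self.trans (measure_mono (Set.subset_univ A))
  · refine le_iSup₂_of_le hd.nullSetᶜ hd.measurableSet_nullSet.compl ?_
    rw [Measure.add_apply, Measure.add_apply, hd.measure_compl_nullSet, add_zero,
      ENNReal.add_sub_cancel_left (measure_ne_top m _),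
      ← measure_add_measure_compl hd.measurableSet_nullSet, hd.measure_nullSet, zero_add]

lemma measure_univ_eq_one_sub_of_add_eq [IsProbabilityMeasure μ] (h : m + d₁ = μ) :
    d₁ Set.univ = 1 - m Set.univ := by
  have hmass : m Set.univ + d₁ Set.univ = 1 := by rw [← Measure.add_apply, h, measure_univ]
  rw [← hmass,
    ENNReal.add_sub_cancel_left (ne_top_of_le_ne_top one_ne_top (hmass ▸ le_self_add))]

end MeasureTheory

lemma tvDist_eq_of_add_of_mutuallySingular {β : Type*} [MeasurableSpace β]
    {μ₁ μ₂ m d₁ d₂ : Measure β} [IsFiniteMeasure m] (h₁ : μ₁ = m + d₁) (h₂ : μ₂ = m + d₂)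
    (hd : d₁ ⟂ₘ d₂) :
    tvDist μ₁ μ₂ = 2 * (d₁ Set.univ ⊔ d₂ Set.univ) := by
  simp_rw [tvDist, iSup_sup_eq]
  rw [iSup_measure_tsub_eq h₁ h₂ hd, iSup_measure_tsub_eq h₂ h₁ hd.symm]

namespace ProbabilityTheory.Kernel

section Overlap

variable {α β : Type*} {mα : MeasurableSpace α} {mβ : MeasurableSpace β}
  [MeasurableSpace.CountableOrCountablyGenerated α β] (ν κ η : Kernel α β) [IsFiniteKernel ν]

noncomputable def overlap : Kernel α β :=
  ν.withDensity fun a => κ.rnDeriv ν a ⊓ η.rnDeriv ν a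

noncomputable def excess : Kernel α β :=
  ν.withDensity fun a => κ.rnDeriv ν a - η.rnDeriv ν a

lemma overlap_comm : overlap ν κ η = overlap ν η κ := by
  simp_rw [overlap, inf_comm]

lemma overlap_apply (a : α) :
    overlap ν κ η a = (ν a).withDensity (κ.rnDeriv ν a ⊓ η.rnDeriv ν a) :=
  Kernel.withDensity_apply _ ((κ.measurable_rnDeriv ν).inf (η.measurable_rnDeriv ν)) a

lemma excess_apply (a : α) :
    excess ν κ η a = (ν a).withDensity (κ.rnDeriv ν a - η.rnDeriv ν a) :=
  Kernel.withDensity_apply _ ((κ.measurable_rnDeriv ν).sub (η.measurable_rnDeriv ν)) a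

lemma mutuallySingular_excess (a : α) : excess ν κ η a ⟂ₘ excess ν η κ a := by
  rw [excess_apply, excess_apply]
  exact withDensity_tsub_mutuallySingular (κ.measurable_rnDeriv_right ν a)
    (η.measurable_rnDeriv_right ν a)

lemma overlap_add_excess [IsFiniteKernel κ] (hκ : ∀ a, κ a ≪ ν a) :
    overlap ν κ η + excess ν κ η = κ := by
  ext a : 1
  rw [add_apply, overlap_apply, excess_apply,
    withDensity_min_add_withDensity_tsub (κ.measurable_rnDeriv_right ν a)
      (η.measurable_rnDeriv_right ν a), ← Kernel.withDensity_apply _ (κ.measurable_rnDeriv ν),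
    withDensity_rnDeriv_eq (hκ a)]

lemma overlap_le [IsFiniteKernel κ] (hκ : ∀ a, κ a ≪ ν a) : overlap ν κ η ≤ κ :=
  calc overlap ν κ η ≤ overlap ν κ η + excess ν κ η := fun _ => Measure.le_add_right le_rfl
    _ = κ := overlap_add_excess ν κ η hκ

lemma excess_le [IsFiniteKernel κ] (hκ : ∀ a, κ a ≪ ν a) : excess ν κ η ≤ κ :=
  calc excess ν κ η ≤ overlap ν κ η + excess ν κ η := fun _ => Measure.le_add_left le_rfl
    _ = κ := overlap_add_excess ν κ η hκ

end Overlap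

section Normalize

variable {α β : Type*} {mα : MeasurableSpace α} {mβ : MeasurableSpace β} (κ η : Kernel α β)
  [IsFiniteKernel κ]

open Classical in
noncomputable def normalize : Kernel α β :=
  piecewise (κ.measurable_coe MeasurableSet.univ (measurableSet_singleton 0)) η
    (κ.withDensity fun a _ => (κ a Set.univ)⁻¹)

variable {κ η} {a : α}

open Classical in
lemma normalize_apply_of_measure_univ_eq_zero (h : κ a Set.univ = 0) :
    normalize κ η a = η a := by
  rw [normalize, piecewise_apply]
  exact if_pos h

open Classical in
lemma normalize_apply_of_measure_univ_ne_zero (h : κ a Set.univ ≠ 0) :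
    normalize κ η a = (κ a Set.univ)⁻¹ • κ a := by
  rw [normalize, piecewise_apply, if_neg (show a ∉ _ from h), Kernel.withDensity_apply,
    withDensity_const]
  exact ((κ.measurable_coe MeasurableSet.univ).inv).comp measurable_fst

instance [IsMarkovKernel η] : IsMarkovKernel (normalize κ η) := by
  refine ⟨fun a => ⟨?_⟩⟩
  by_cases h : κ a Set.univ = 0
  · rw [normalize_apply_of_measure_univ_eq_zero h, measure_univ]
  · rw [normalize_apply_of_measure_univ_ne_zero h, Measure.smul_apply, smul_eq_mul,
      ENNReal.inv_mul_cancel h (measure_ne_top _ _)]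

variable (κ η) in
lemma measure_univ_smul_normalize_apply (a : α) : κ a Set.univ • normalize κ η a = κ a := by
  by_cases h : κ a Set.univ = 0
  · rw [h, zero_smul, Measure.measure_univ_eq_zero.mp h]
  · rw [normalize_apply_of_measure_univ_ne_zero h, smul_smul,
      ENNReal.mul_inv_cancel h (measure_ne_top _ _), one_smul]

lemma normalize_apply_absolutelyContinuous {μ : Measure β} (hκ : κ a ≪ μ) (hη : η a ≪ μ) :
    normalize κ η a ≪ μ := by
  by_cases h : κ a Set.univ = 0
  · rwa [normalize_apply_of_measure_univ_eq_zero h]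
  · rw [normalize_apply_of_measure_univ_ne_zero h]
    exact (Measure.AbsolutelyContinuous.smul_left .rfl _).trans hκ

lemma apply_eq_smul_normalize_add_smul_normalize {κ κ₁ κ₂ : Kernel α β} [IsMarkovKernel κ]
    [IsFiniteKernel κ₁] [IsFiniteKernel κ₂] (h : κ₁ + κ₂ = κ) (ξ₁ ξ₂ : Kernel α β) (a : α) :
    κ a = κ₁ a Set.univ • normalize κ₁ ξ₁ a + (1 - κ₁ a Set.univ) • normalize κ₂ ξ₂ a := by
  rw [← measure_univ_eq_one_sub_of_add_eq (DFunLike.congr_fun h a),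
    measure_univ_smul_normalize_apply, measure_univ_smul_normalize_apply, ← h, add_apply]

end Normalize

end ProbabilityTheory.Kernel

open ProbabilityTheory.Kernel in
/-- **Splitting representation for a pair of transition probabilities.** For a Markov kernel
`P` on a countably generated measurable space there are a measurable `p : E × E → [0,1]` and
Markov kernels `Θ, Σ₁, Σ₂` (here `Θ, S₁, S₂`) from `E × E` to `E` such that
`p(x₁,x₂) = 1 - (1/2)‖P(x₁,·) - P(x₂,·)‖`,
`P(xᵢ,·) = p(x₁,x₂) Θ(x₁,x₂;·) + (1 - p(x₁,x₂)) Σᵢ(x₁,x₂;·)` and `Σᵢ(x₁,x₂;·) ≪ P(xᵢ,·)`. -/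
theorem splitting_representation
    {E : Type*} [MeasurableSpace E] [MeasurableSpace.CountablyGenerated E]
    (P : ProbabilityTheory.Kernel E E) [IsMarkovKernel P] :
    ∃ (p : E × E → ℝ≥0∞) (Θ S₁ S₂ : ProbabilityTheory.Kernel (E × E) E),
      Measurable p ∧ (∀ x : E × E, p x ≤ 1) ∧
      IsMarkovKernel Θ ∧ IsMarkovKernel S₁ ∧ IsMarkovKernel S₂ ∧
      ∀ x : E × E,
        p x = 1 - (1 / 2 : ℝ≥0∞) * tvDist (P x.1) (P x.2) ∧
        P x.1 = p x • Θ x + (1 - p x) • S₁ x ∧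
        P x.2 = p x • Θ x + (1 - p x) • S₂ x ∧
        S₁ x ≪ P x.1 ∧ S₂ x ≪ P x.2 := by
  set κ := P.prodMkRight E
  set η := P.prodMkLeft E
  have hκ : ∀ x, κ x ≪ (κ + η) x := fun x => .add_right .rfl (η x)
  have hη : ∀ x, η x ≪ (κ + η) x := fun x => .add_right' .rfl (κ x)
  set M := overlap (κ + η) κ η
  set D₁ := excess (κ + η) κ η
  set D₂ := excess (κ + η) η κ
  have hsplit₁ : M + D₁ = κ := overlap_add_excess _ κ η hκ
  have hsplit₂ : M + D₂ = η := by
    rw [show M = overlap _ η κ from overlap_comm _ κ η]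
    exact overlap_add_excess _ η κ hη
  have := isFiniteKernel_of_le (overlap_le _ κ η hκ)
  have := isFiniteKernel_of_le (excess_le _ κ η hκ)
  have := isFiniteKernel_of_le (excess_le _ η κ hη)
  have hp_le : ∀ x, M x Set.univ ≤ 1 := fun x =>
    (overlap_le _ κ η hκ x Set.univ).trans_eq measure_univ
  refine ⟨fun x => M x Set.univ, normalize M κ, normalize D₁ κ, normalize D₂ η,
    M.measurable_coe .univ, hp_le, inferInstance, inferInstance, inferInstance, fun x => ⟨?_,
    apply_eq_smul_normalize_add_smul_normalize hsplit₁ κ κ x,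
    apply_eq_smul_normalize_add_smul_normalize hsplit₂ κ η x,
    normalize_apply_absolutelyContinuous (excess_le _ κ η hκ x).absolutelyContinuous .rfl,
    normalize_apply_absolutelyContinuous (excess_le _ η κ hη x).absolutelyContinuous .rfl⟩⟩
  show M x Set.univ = 1 - 1 / 2 * tvDist (κ x) (η x)
  have htv : tvDist (κ x) (η x) = 2 * (1 - M x Set.univ) := by
    rw [tvDist_eq_of_add_of_mutuallySingular (DFunLike.congr_fun hsplit₁ x).symm
      (DFunLike.congr_fun hsplit₂ x).symm (mutuallySingular_excess _ κ η x),
      measure_univ_eq_one_sub_of_add_eq (DFunLike.congr_fun hsplit₁ x),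
      measure_univ_eq_one_sub_of_add_eq (DFunLike.congr_fun hsplit₂ x), sup_idem]
  rw [htv, ← mul_assoc, ENNReal.div_mul_cancel two_ne_zero ofNat_ne_top, one_mul,
    ENNReal.sub_sub_cancel one_ne_top (hp_le x)]
end

section
/- Let P be a Markov kernel on a measurable space (E, 𝓔) with an invariant probability measure μ, and let B ∈ 𝓔. Define ψ(x) = ℙ_x(X_n ∈ B for infinitely many n). Then ψ(x) ∈ {0, 1} for μ-almost all x ∈ E. -/
open MeasureTheory ProbabilityTheory ENNReal

/-!
`ψ` is harmonic, and a harmonic function in `L²(μ)` is `P(x, ·)`-a.s. constant for `μ`-a.e. `x`: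
by invariance, `∫∫ |ψ y - ψ x|² P(x, dy) μ(dx) = ∫ Pψ² dμ - ∫ ψ² dμ = 0`.
Similarly `ψ_N x = ℙ_x(X_n ∈ B for some n ≥ N)` satisfies `Pψ_N = ψ_{N+1}`, so all `ψ_N` have the
same `μ`-integral, and `ψ_N ↓ ψ` forces `ψ = ψ_0` `μ`-a.e.
On a `P`-absorbing set of full measure where both facts hold, the points with `ψ < 1` form an
absorbing set disjoint from `B` (as `ψ_0 = 1` on `B`); a chain started there never visits `B`,
so `ψ = 0` there.
-/

lemma ENNReal.sq_tsub_add_sq_tsub_add_two_mul {a b : ℝ≥0∞} (ha : a ≠ ∞) (hb : b ≠ ∞) :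
    (a - b) ^ 2 + (b - a) ^ 2 + 2 * a * b = a ^ 2 + b ^ 2 := by
  rcases le_total a b with h | h
  · obtain ⟨c, rfl⟩ := exists_add_of_le h
    rw [tsub_eq_zero_of_le h, ENNReal.add_sub_cancel_left ha]
    ring
  · obtain ⟨c, rfl⟩ := exists_add_of_le h
    rw [tsub_eq_zero_of_le h, ENNReal.add_sub_cancel_left hb]
    ring

namespace ProbabilityTheory.Kernel

variable {E : Type*} [MeasurableSpace E] {P : Kernel E E} {μ : Measure E}

lemma invariant_of_forall_measure_eq (h : ∀ A, MeasurableSet A → μ A = ∫⁻ x, P x A ∂μ) :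
    P.Invariant μ := by
  ext A hA
  rw [Measure.bind_apply hA P.aemeasurable, h A hA]

lemma Invariant.lintegral_lintegral (hP : P.Invariant μ) {f : E → ℝ≥0∞} (hf : Measurable f) :
    ∫⁻ x, ∫⁻ y, f y ∂P x ∂μ = ∫⁻ x, f x ∂μ := by
  conv_rhs => rw [← hP.def]
  rw [Measure.lintegral_bind P.aemeasurable hf.aemeasurable]

lemma Invariant.ae_ae (hP : P.Invariant μ) {p : E → Prop} (h : ∀ᵐ x ∂μ, p x) :
    ∀ᵐ x ∂μ, ∀ᵐ y ∂P x, p y :=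
  Measure.ae_ae_of_ae_comp (by rwa [hP.def])

lemma measurableSet_setOf_ae_mem {s : Set E} (hs : MeasurableSet s) :
    MeasurableSet {x | ∀ᵐ y ∂P x, y ∈ s} :=
  P.measurable_coe hs.compl (measurableSet_singleton 0)

lemma Invariant.exists_absorbing_subset (hP : P.Invariant μ) {p : E → Prop}
    (hp : ∀ᵐ x ∂μ, p x) :
    ∃ F, MeasurableSet F ∧ (∀ᵐ x ∂μ, x ∈ F) ∧ (∀ x ∈ F, p x) ∧
      ∀ x ∈ F, ∀ᵐ y ∂P x, y ∈ F := by
  set G := (toMeasurable μ {x | p x}ᶜ)ᶜ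
  set step : Set E → Set E := fun S => S ∩ {x | ∀ᵐ y ∂P x, y ∈ S}
  have hstep : ∀ n, step^[n + 1] G = step^[n] G ∩ {x | ∀ᵐ y ∂P x, y ∈ step^[n] G} :=
    fun n => Function.iterate_succ_apply' _ _ _
  have hmeas : ∀ n, MeasurableSet (step^[n] G) := by
    intro n
    induction n with
    | zero => exact (measurableSet_toMeasurable _ _).compl
    | succ n ih => rw [hstep]; exact ih.inter (measurableSet_setOf_ae_mem ih)
  have hfull : ∀ n, ∀ᵐ x ∂μ, x ∈ step^[n] G := by
    intro n
    induction n with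
    | zero =>
      exact measure_eq_zero_iff_ae_notMem.mp ((measure_toMeasurable _).trans (ae_iff.mp hp))
    | succ n ih => rw [hstep]; exact ih.and (hP.ae_ae ih)
  refine ⟨⋂ n, step^[n] G, .iInter hmeas, (ae_all_iff.mpr hfull).mono fun _ => Set.mem_iInter.mpr,
    fun x hx => ?_, fun x hx => ?_⟩
  · have hxG : x ∈ G := Set.mem_iInter.mp hx 0
    by_contra hpx
    exact hxG (subset_toMeasurable μ _ hpx)
  · refine (ae_all_iff.mpr fun n => ?_).mono fun _ => Set.mem_iInter.mpr
    have hx' := Set.mem_iInter.mp hx (n + 1)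
    rw [hstep] at hx'
    exact hx'.2

lemma Invariant.ae_ae_eq_of_harmonic [IsMarkovKernel P] (hP : P.Invariant μ)
    {f : E → ℝ≥0∞} (hf : Measurable f) (hPf : ∀ x, ∫⁻ y, f y ∂P x = f x)
    (hf_top : ∀ x, f x ≠ ∞) (hf2 : ∫⁻ x, f x ^ 2 ∂μ ≠ ∞) :
    ∀ᵐ x ∂μ, ∀ᵐ y ∂P x, f y = f x := by
  -- one of the two truncated differences vanishes, so `d x y = |f y - f x| ^ 2`
  set d : E → E → ℝ≥0∞ := fun x y => (f y - f x) ^ 2 + (f x - f y) ^ 2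
  have hd : Measurable (Function.uncurry d) := by fun_prop
  have hdx : ∀ x, Measurable (d x) := fun x => hd.comp measurable_prodMk_left
  have hd_lintegral : ∀ x, ∫⁻ y, d x y ∂P x + 2 * f x ^ 2 = ∫⁻ y, f y ^ 2 ∂P x + f x ^ 2 := by
    intro x
    calc ∫⁻ y, d x y ∂P x + 2 * f x ^ 2
        = ∫⁻ y, d x y ∂P x + ∫⁻ y, 2 * f y * f x ∂P x := by
          rw [MeasureTheory.lintegral_mul_const _ (hf.const_mul 2),
            MeasureTheory.lintegral_const_mul _ hf, hPf]
          ring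
      _ = ∫⁻ y, (f y ^ 2 + f x ^ 2) ∂P x := by
          rw [← lintegral_add_left (hdx x)]
          exact lintegral_congr fun y =>
            ENNReal.sq_tsub_add_sq_tsub_add_two_mul (hf_top y) (hf_top x)
      _ = ∫⁻ y, f y ^ 2 ∂P x + f x ^ 2 := by
          rw [lintegral_add_left (hf.pow_const 2), MeasureTheory.lintegral_const, measure_univ,
            mul_one]
  have hint : ∫⁻ x, ∫⁻ y, d x y ∂P x ∂μ = 0 := by
    have hf2m : Measurable fun x => f x ^ 2 := hf.pow_const 2
    refine (ENNReal.add_left_inj (ENNReal.mul_ne_top (ofNat_ne_top (n := 2)) hf2)).mp ?_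
    calc ∫⁻ x, ∫⁻ y, d x y ∂P x ∂μ + 2 * ∫⁻ x, f x ^ 2 ∂μ
        = ∫⁻ x, (∫⁻ y, d x y ∂P x + 2 * f x ^ 2) ∂μ := by
          rw [lintegral_add_right _ (hf2m.const_mul 2), MeasureTheory.lintegral_const_mul _ hf2m]
      _ = ∫⁻ x, (∫⁻ y, f y ^ 2 ∂P x + f x ^ 2) ∂μ := lintegral_congr hd_lintegral
      _ = 0 + 2 * ∫⁻ x, f x ^ 2 ∂μ := by
          rw [lintegral_add_right _ hf2m, hP.lintegral_lintegral hf2m, zero_add, two_mul]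
  filter_upwards [(lintegral_eq_zero_iff hd.lintegral_kernel_prod_right').mp hint] with x hx
  filter_upwards [(lintegral_eq_zero_iff (hdx x)).mp hx] with y hy
  simp only [d, Pi.zero_apply, add_eq_zero, pow_eq_zero_iff two_ne_zero, tsub_eq_zero_iff_le] at hy
  exact le_antisymm hy.1 hy.2

end ProbabilityTheory.Kernel

namespace MarkovChain

variable {E : Type*}

def shift (ω : ℕ → E) : ℕ → E := fun k => ω (k + 1)

def hitsFrom (B : Set E) (N : ℕ) : Set (ℕ → E) := {ω | ∃ n ≥ N, ω n ∈ B}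

def hitsInfOften (B : Set E) : Set (ℕ → E) := {ω | ∀ N, ∃ n ≥ N, ω n ∈ B}

lemma hitsInfOften_eq_iInter (B : Set E) : hitsInfOften B = ⋂ N, hitsFrom B N := by
  ext ω
  simp [hitsInfOften, hitsFrom]

lemma antitone_hitsFrom (B : Set E) : Antitone (hitsFrom B) :=
  fun _ _ hNM _ ⟨n, hn, hB⟩ => ⟨n, hNM.trans hn, hB⟩

lemma shift_preimage_hitsFrom (B : Set E) (N : ℕ) :
    shift ⁻¹' hitsFrom B N = hitsFrom B (N + 1) := by
  ext ω
  constructor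
  · rintro ⟨n, hn, hB⟩
    exact ⟨n + 1, by omega, hB⟩
  · rintro ⟨_ | n, hn, hB⟩
    · omega
    · exact ⟨n, by omega, hB⟩

lemma shift_preimage_hitsInfOften (B : Set E) : shift ⁻¹' hitsInfOften B = hitsInfOften B := by
  ext ω
  simp only [hitsInfOften_eq_iInter, Set.preimage_iInter, shift_preimage_hitsFrom, Set.mem_iInter]
  exact ⟨fun h N => antitone_hitsFrom B N.le_succ (h N), fun h N => h (N + 1)⟩

variable [MeasurableSpace E]

lemma measurable_shift : Measurable (shift : (ℕ → E) → ℕ → E) :=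
  measurable_pi_lambda _ fun k => measurable_pi_apply (k + 1)

lemma measurableSet_hitsFrom {B : Set E} (hB : MeasurableSet B) (N : ℕ) :
    MeasurableSet (hitsFrom B N) := by
  have : hitsFrom B N = ⋃ n ≥ N, (fun ω => ω n) ⁻¹' B := by
    ext
    simp [hitsFrom]
  rw [this]
  exact .biUnion (Set.to_countable _) fun n _ => measurable_pi_apply n hB

lemma measurableSet_hitsInfOften {B : Set E} (hB : MeasurableSet B) :
    MeasurableSet (hitsInfOften B) := by
  rw [hitsInfOften_eq_iInter]
  exact .iInter (measurableSet_hitsFrom hB)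

variable {P : Kernel E E} {ν : Kernel E (ℕ → E)}

lemma measure_shift_preimage (hν : ∀ x, (ν x).map shift = (P x).bind ν) (x : E)
    {S : Set (ℕ → E)} (hS : MeasurableSet S) :
    ν x (shift ⁻¹' S) = ∫⁻ y, ν y S ∂P x := by
  rw [← Measure.map_apply measurable_shift hS, hν, Measure.bind_apply hS ν.aemeasurable]

lemma ae_shift_iff (hν : ∀ x, (ν x).map shift = (P x).bind ν) (x : E) {p : (ℕ → E) → Prop}
    (hp : MeasurableSet {ω | p ω}) :
    (∀ᵐ ω ∂ν x, p (shift ω)) ↔ ∀ᵐ y ∂P x, ∀ᵐ ω ∂ν y, p ω := by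
  rw [← ae_map_iff measurable_shift.aemeasurable hp, hν, Measure.ae_comp_iff hp]

lemma ae_mem_of_mem (hν0 : ∀ x, (ν x).map (fun ω => ω 0) = Measure.dirac x)
    {S : Set E} (hS : MeasurableSet S) {x : E} (hx : x ∈ S) : ∀ᵐ ω ∂ν x, ω 0 ∈ S := by
  refine ae_of_ae_map (measurable_pi_apply 0).aemeasurable ?_
  rwa [hν0, ae_dirac_iff (p := (· ∈ S)) hS]

lemma ae_forall_mem_of_absorbing (hν0 : ∀ x, (ν x).map (fun ω => ω 0) = Measure.dirac x)
    (hν : ∀ x, (ν x).map shift = (P x).bind ν) {C : Set E} (hC : MeasurableSet C)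
    (hCP : ∀ x ∈ C, ∀ᵐ y ∂P x, y ∈ C) {x : E} (hx : x ∈ C) : ∀ᵐ ω ∂ν x, ∀ n, ω n ∈ C := by
  refine ae_all_iff.mpr fun n => ?_
  induction n generalizing x with
  | zero => exact ae_mem_of_mem hν0 hC hx
  | succ n ih =>
    exact (ae_shift_iff hν x (measurable_pi_apply n hC)).mpr ((hCP x hx).mono fun y hy => ih hy)

lemma lintegral_measure_hitsFrom (hν : ∀ x, (ν x).map shift = (P x).bind ν) {B : Set E}
    (hB : MeasurableSet B) (x : E) (N : ℕ) :
    ∫⁻ y, ν y (hitsFrom B N) ∂P x = ν x (hitsFrom B (N + 1)) := by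
  rw [← shift_preimage_hitsFrom, measure_shift_preimage hν x (measurableSet_hitsFrom hB N)]

lemma lintegral_measure_hitsInfOften (hν : ∀ x, (ν x).map shift = (P x).bind ν) {B : Set E}
    (hB : MeasurableSet B) (x : E) :
    ∫⁻ y, ν y (hitsInfOften B) ∂P x = ν x (hitsInfOften B) := by
  conv_rhs => rw [← shift_preimage_hitsInfOften]
  rw [measure_shift_preimage hν x (measurableSet_hitsInfOften hB)]

lemma measure_hitsFrom_zero_eq_one [IsMarkovKernel ν]
    (hν0 : ∀ x, (ν x).map (fun ω => ω 0) = Measure.dirac x) {B : Set E} (hB : MeasurableSet B)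
    {x : E} (hx : x ∈ B) : ν x (hitsFrom B 0) = 1 :=
  (prob_compl_eq_zero_iff (measurableSet_hitsFrom hB 0)).mp <| mem_ae_iff.mp <|
    (ae_mem_of_mem hν0 hB hx).mono fun _ hω => ⟨0, le_rfl, hω⟩

variable {μ : Measure E}

lemma lintegral_measure_hitsFrom_eq_of_invariant (hP : P.Invariant μ)
    (hν : ∀ x, (ν x).map shift = (P x).bind ν) {B : Set E} (hB : MeasurableSet B) (N : ℕ) :
    ∫⁻ x, ν x (hitsFrom B N) ∂μ = ∫⁻ x, ν x (hitsFrom B 0) ∂μ := by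
  induction N with
  | zero => rfl
  | succ N ih =>
    simp_rw [← lintegral_measure_hitsFrom hν hB]
    rw [hP.lintegral_lintegral (ν.measurable_coe (measurableSet_hitsFrom hB N)), ih]

lemma ae_measure_hitsInfOften_eq_of_invariant [IsFiniteMeasure μ] [IsFiniteKernel ν]
    (hP : P.Invariant μ) (hν : ∀ x, (ν x).map shift = (P x).bind ν) {B : Set E}
    (hB : MeasurableSet B) : ∀ᵐ x ∂μ, ν x (hitsInfOften B) = ν x (hitsFrom B 0) := by
  have hmeas : ∀ N, Measurable fun x => ν x (hitsFrom B N) :=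
    fun N => ν.measurable_coe (measurableSet_hitsFrom hB N)
  have hfin : ∀ S, MeasurableSet S → ∫⁻ x, ν x S ∂μ ≠ ∞ := fun S hS => by
    rw [← Measure.bind_apply hS ν.aemeasurable]
    exact measure_ne_top _ _
  refine ae_eq_of_ae_le_of_lintegral_le
    (ae_of_all _ fun x => measure_mono ((hitsInfOften_eq_iInter B).trans_subset
      (Set.iInter_subset _ 0)))
    (hfin _ (measurableSet_hitsInfOften hB)) (hmeas 0).aemeasurable (le_of_eq ?_)
  calc ∫⁻ x, ν x (hitsFrom B 0) ∂μ = ⨅ N, ∫⁻ x, ν x (hitsFrom B N) ∂μ := by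
        simp_rw [lintegral_measure_hitsFrom_eq_of_invariant hP hν hB, iInf_const]
    _ = ∫⁻ x, ⨅ N, ν x (hitsFrom B N) ∂μ :=
        (lintegral_iInf hmeas (fun _ _ h x => measure_mono (antitone_hitsFrom B h))
          (hfin _ (measurableSet_hitsFrom hB 0))).symm
    _ = ∫⁻ x, ν x (hitsInfOften B) ∂μ := by
        simp_rw [hitsInfOften_eq_iInter, (antitone_hitsFrom B).measure_iInter
          (fun N => (measurableSet_hitsFrom hB N).nullMeasurableSet) ⟨0, measure_ne_top _ _⟩]

lemma measure_hitsInfOften_eq_zero_or_one [IsMarkovKernel ν]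
    (hν0 : ∀ x, (ν x).map (fun ω => ω 0) = Measure.dirac x)
    (hν : ∀ x, (ν x).map shift = (P x).bind ν) {B : Set E} (hB : MeasurableSet B)
    {F : Set E} (hF : MeasurableSet F) (hFP : ∀ x ∈ F, ∀ᵐ y ∂P x, y ∈ F)
    (hF_eq : ∀ x ∈ F, ν x (hitsInfOften B) = ν x (hitsFrom B 0))
    (hF_const : ∀ x ∈ F, ∀ᵐ y ∂P x, ν y (hitsInfOften B) = ν x (hitsInfOften B))
    {x : E} (hx : x ∈ F) : ν x (hitsInfOften B) = 0 ∨ ν x (hitsInfOften B) = 1 := by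
  refine prob_le_one.lt_or_eq.imp (fun hlt => ?_) id
  set C := F ∩ {y | ν y (hitsInfOften B) < 1}
  have hC : MeasurableSet C := hF.inter <|
    measurableSet_lt (ν.measurable_coe (measurableSet_hitsInfOften hB)) measurable_const
  have hCP : ∀ y ∈ C, ∀ᵐ z ∂P y, z ∈ C := fun y hy => by
    filter_upwards [hFP y hy.1, hF_const y hy.1] with z hzF hz
    exact ⟨hzF, hz.trans_lt hy.2⟩
  have hCB : Disjoint C B := Set.disjoint_left.mpr fun y hyC hyB =>
    hyC.2.ne (hF_eq y hyC.1 ▸ measure_hitsFrom_zero_eq_one hν0 hB hyB)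
  have hnull : ν x (hitsFrom B 0) = 0 := by
    rw [measure_eq_zero_iff_ae_notMem]
    filter_upwards [ae_forall_mem_of_absorbing hν0 hν hC hCP ⟨hx, hlt⟩] with ω hω ⟨n, _, hn⟩
    exact Set.disjoint_left.mp hCB (hω n) hn
  rw [hF_eq x hx, hnull]

end MarkovChain

open MarkovChain in
/-- If `μ` is an invariant probability measure for `P`, then
`ψ(x) = ℙ_x(X_n ∈ B infinitely often) ∈ {0, 1}` for `μ`-a.a. `x`. Here `ν x = ℙ_x` is
the law on path space of the chain started at `x`. -/
theorem psi_zero_one_ae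
    {E : Type*} [MeasurableSpace E]
    (P : ProbabilityTheory.Kernel E E) [IsMarkovKernel P]
    (μ : Measure E) [IsProbabilityMeasure μ]
    (hinv : ∀ A : Set E, MeasurableSet A → μ A = ∫⁻ x, P x A ∂μ)
    (ν : ProbabilityTheory.Kernel E (ℕ → E)) [IsMarkovKernel ν]
    (hν0 : ∀ x : E, (ν x).map (fun ω => ω 0) = Measure.dirac x)
    (hνM : ∀ x : E, (ν x).map (fun ω k => ω (k + 1)) = (P x).bind (fun y => ν y))
    (B : Set E) (hB : MeasurableSet B) :
    ∀ᵐ x ∂μ, ν x {ω : ℕ → E | ∀ N : ℕ, ∃ n ≥ N, ω n ∈ B} = 0 ∨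
      ν x {ω : ℕ → E | ∀ N : ℕ, ∃ n ≥ N, ω n ∈ B} = 1 := by
  have hP : P.Invariant μ := Kernel.invariant_of_forall_measure_eq hinv
  have hν : ∀ x, (ν x).map shift = (P x).bind ν := hνM
  have hψ : Measurable fun x => ν x (hitsInfOften B) :=
    ν.measurable_coe (measurableSet_hitsInfOften hB)
  have hψ2 : ∫⁻ x, ν x (hitsInfOften B) ^ 2 ∂μ ≠ ∞ :=
    ne_top_of_le_ne_top (measure_ne_top μ Set.univ) <|
      (lintegral_mono fun _ => pow_le_one₀ zero_le prob_le_one).trans_eq lintegral_one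
  have h_const : ∀ᵐ x ∂μ, ∀ᵐ y ∂P x, ν y (hitsInfOften B) = ν x (hitsInfOften B) :=
    hP.ae_ae_eq_of_harmonic hψ (lintegral_measure_hitsInfOften hν hB)
      (fun _ => measure_ne_top _ _) hψ2
  obtain ⟨F, hF, hμF, hFp, hFP⟩ :=
    hP.exists_absorbing_subset ((ae_measure_hitsInfOften_eq_of_invariant hP hν hB).and h_const)
  filter_upwards [hμF] with x hx
  exact measure_hitsInfOften_eq_zero_or_one hν0 hν hB hF hFP (fun y hy => (hFp y hy).1)
    (fun y hy => (hFp y hy).2) hx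
end

section
/- Let X be a Markov chain on E with transition kernel P and n-step transition probabilities P_n(x,·), admitting an invariant probability measure μ. Assume that for μ ⊗ μ-almost all (x, y) ∈ E × E there exists n with P_n(x,·) and P_n(y,·) not mutually singular. Then for μ ⊗ μ-almost all pairs (x₁, x₂) ∈ E × E, the total variation distance ‖P_n(x₁,·) − P_n(x₂,·)‖ tends to 0 as n → ∞. -/
open MeasureTheory ProbabilityTheory Filter ENNReal

/-!
Let `d_n(x, y)` be half the total variation distance between `P_n(x, ·)` and `P_n(y, ·)`; it
decreases to `d(x, y)`. Running the chains from `x` and `y` independently for `k` steps shows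
that `d` and `d²` are subharmonic for the product kernel `Q_k = P_k ⊗ P_k`, which preserves
`μ ⊗ μ`. A bounded subharmonic function is harmonic a.e. for an invariant measure, so for a.e.
`(x, y)` the variance of `d` under `Q_k(x, y)` vanishes: `d = d(x, y)` holds `Q_k(x, y)`-a.s.
Coupling instead the common part of `P_k(x, ·)` and `P_k(y, ·)` on the diagonal and their
residuals, of mass `s = d_k(x, y)`, independently, gives `d(x, y) s ≤ d(x, y) s²`. So
`d(x, y) > 0` forces `s = 1`, i.e. `P_k(x, ·) ⟂ P_k(y, ·)` for every `k`.
-/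

open Set

section HalfTvDist

variable {E : Type*} [MeasurableSpace E]

noncomputable def halfTvDist (ν ρ : Measure E) : ℝ≥0∞ :=
  ⨆ (A : Set E) (_ : MeasurableSet A), (ν A - ρ A) ⊔ (ρ A - ν A)

lemma tvDist_eq_two_mul_halfTvDist (ν ρ : Measure E) : tvDist ν ρ = 2 * halfTvDist ν ρ := rfl

lemma halfTvDist_comm (ν ρ : Measure E) : halfTvDist ν ρ = halfTvDist ρ ν := by
  simp only [halfTvDist, sup_comm]

lemma measure_sub_le_halfTvDist {ν ρ : Measure E} {A : Set E} (hA : MeasurableSet A) :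
    ν A - ρ A ≤ halfTvDist ν ρ :=
  le_sup_left.trans <|
    le_iSup₂ (f := fun A (_ : MeasurableSet A) => (ν A - ρ A) ⊔ (ρ A - ν A)) A hA

lemma halfTvDist_mul_le {ν ρ : Measure E} {s c : ℝ≥0∞}
    (h : ∀ A, MeasurableSet A → (ν A - ρ A) * s ≤ c)
    (h' : ∀ A, MeasurableSet A → (ρ A - ν A) * s ≤ c) : halfTvDist ν ρ * s ≤ c := by
  simp only [halfTvDist, ENNReal.iSup_mul]
  refine iSup₂_le fun A hA => ?_
  rw [(mul_left_mono : Monotone (· * s)).map_max]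
  exact sup_le (h A hA) (h' A hA)

lemma halfTvDist_le {ν ρ : Measure E} {c : ℝ≥0∞} (h : ∀ A, MeasurableSet A → ν A - ρ A ≤ c)
    (h' : ∀ A, MeasurableSet A → ρ A - ν A ≤ c) : halfTvDist ν ρ ≤ c := by
  simpa using halfTvDist_mul_le (s := 1) (by simpa using h) (by simpa using h')

lemma halfTvDist_le_one (ν ρ : Measure E) [IsProbabilityMeasure ν] [IsProbabilityMeasure ρ] :
    halfTvDist ν ρ ≤ 1 :=
  halfTvDist_le (fun _ _ => tsub_le_self.trans prob_le_one)
    (fun _ _ => tsub_le_self.trans prob_le_one)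

lemma withDensity_inf_add_withDensity_sub (σ : Measure E) {f g : E → ℝ≥0∞}
    (hf : Measurable f) (hg : Measurable g) :
    σ.withDensity (f ⊓ g) + σ.withDensity (f - g) = σ.withDensity f := by
  rw [← withDensity_add_right _ (hf.sub hg)]
  congr 1
  funext z
  rcases le_total (f z) (g z) with h | h
  · simp [h, tsub_eq_zero_of_le h]
  · simp [h, add_tsub_cancel_of_le h]

lemma withDensity_sub_mutuallySingular (σ : Measure E) {f g : E → ℝ≥0∞}
    (hf : Measurable f) (hg : Measurable g) :
    σ.withDensity (f - g) ⟂ₘ σ.withDensity (g - f) := by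
  refine ⟨{z | f z ≤ g z}, measurableSet_le hf hg, ?_, ?_⟩
  · rw [withDensity_apply_eq_zero' (hf.sub hg).aemeasurable]
    convert measure_empty (μ := σ)
    ext z
    simp [tsub_eq_zero_iff_le]
  · rw [withDensity_apply_eq_zero' (hg.sub hf).aemeasurable]
    convert measure_empty (μ := σ)
    ext z
    simpa [tsub_eq_zero_iff_le] using fun h : f z < g z => h.le

lemma withDensity_rnDeriv_inf_add_withDensity_rnDeriv_sub {ν σ : Measure E} (ρ : Measure E)
    [ν.HaveLebesgueDecomposition σ] (hν : ν ≪ σ) :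
    σ.withDensity (ν.rnDeriv σ ⊓ ρ.rnDeriv σ) + σ.withDensity (ν.rnDeriv σ - ρ.rnDeriv σ) = ν := by
  rw [withDensity_inf_add_withDensity_sub _ (Measure.measurable_rnDeriv _ _)
    (Measure.measurable_rnDeriv _ _), Measure.withDensity_rnDeriv_eq _ _ hν]

lemma exists_eq_add_add_mutuallySingular (ν ρ : Measure E) [IsFiniteMeasure ν]
    [IsFiniteMeasure ρ] : ∃ lam R₁ R₂ : Measure E, ν = lam + R₁ ∧ ρ = lam + R₂ ∧ R₁ ⟂ₘ R₂ ∧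
      R₁ = (ν + ρ).withDensity (ν.rnDeriv (ν + ρ) - ρ.rnDeriv (ν + ρ)) := by
  set σ := ν + ρ
  refine ⟨σ.withDensity (ν.rnDeriv σ ⊓ ρ.rnDeriv σ), σ.withDensity (ν.rnDeriv σ - ρ.rnDeriv σ),
    σ.withDensity (ρ.rnDeriv σ - ν.rnDeriv σ), ?_, ?_, withDensity_sub_mutuallySingular σ
      (Measure.measurable_rnDeriv _ _) (Measure.measurable_rnDeriv _ _), rfl⟩
  · exact (withDensity_rnDeriv_inf_add_withDensity_rnDeriv_sub ρ
      (Measure.AbsolutelyContinuous.rfl.add_right ρ)).symm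
  · rw [inf_comm]
    exact (withDensity_rnDeriv_inf_add_withDensity_rnDeriv_sub ν
      (Measure.AbsolutelyContinuous.rfl.add_right' ν)).symm

section Decomposition

variable {ν ρ lam R₁ R₂ : Measure E} [IsProbabilityMeasure ν] [IsProbabilityMeasure ρ]

lemma measure_univ_eq_of_eq_add (hν : ν = lam + R₁) (hρ : ρ = lam + R₂) :
    R₂ univ = R₁ univ := by
  have hlam : lam univ ≠ ∞ :=
    ne_top_of_le_ne_top (measure_ne_top ν univ) (hν ▸ Measure.le_add_right le_rfl univ)
  rw [← ENNReal.add_right_inj hlam, ← Measure.add_apply, ← Measure.add_apply, ← hν, ← hρ,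
    measure_univ, measure_univ]

lemma halfTvDist_eq_of_eq_add (hν : ν = lam + R₁) (hρ : ρ = lam + R₂) (hR : R₁ ⟂ₘ R₂) :
    halfTvDist ν ρ = R₁ univ := by
  have hsub : ∀ A, ν A - ρ A ≤ R₁ A - R₂ A ∧ ρ A - ν A ≤ R₂ A - R₁ A := fun A => by
    rw [hν, hρ, Measure.add_apply, Measure.add_apply]
    exact ⟨add_tsub_add_le_tsub_left, add_tsub_add_le_tsub_left⟩
  refine le_antisymm (halfTvDist_le (fun A _ => ?_) (fun A _ => ?_)) ?_
  · exact (hsub A).1.trans (tsub_le_self.trans (measure_mono (subset_univ A)))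
  · rw [← measure_univ_eq_of_eq_add hν hρ]
    exact (hsub A).2.trans (tsub_le_self.trans (measure_mono (subset_univ A)))
  · set s := hR.nullSet
    have hlam : lam sᶜ ≠ ∞ :=
      ne_top_of_le_ne_top (measure_ne_top ν sᶜ) (hν ▸ Measure.le_add_right le_rfl sᶜ)
    calc R₁ univ = R₁ sᶜ := by
          rw [← measure_add_measure_compl hR.measurableSet_nullSet, hR.measure_nullSet, zero_add]
      _ = ν sᶜ - ρ sᶜ := by
          rw [hν, hρ, Measure.add_apply, Measure.add_apply, hR.measure_compl_nullSet, add_zero,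
            ENNReal.add_sub_cancel_left hlam]
      _ ≤ halfTvDist ν ρ := measure_sub_le_halfTvDist hR.measurableSet_nullSet.compl

end Decomposition

lemma halfTvDist_eq_lintegral_rnDeriv (ν ρ : Measure E) [IsProbabilityMeasure ν]
    [IsProbabilityMeasure ρ] :
    halfTvDist ν ρ = ∫⁻ z, ν.rnDeriv (ν + ρ) z - ρ.rnDeriv (ν + ρ) z ∂(ν + ρ) := by
  obtain ⟨lam, R₁, R₂, h₁, h₂, hR, rfl⟩ := exists_eq_add_add_mutuallySingular ν ρ
  rw [halfTvDist_eq_of_eq_add h₁ h₂ hR, withDensity_apply _ MeasurableSet.univ,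
    Measure.restrict_univ]
  rfl

lemma mutuallySingular_of_halfTvDist_eq_one (ν ρ : Measure E) [IsProbabilityMeasure ν]
    [IsProbabilityMeasure ρ] (h : halfTvDist ν ρ = 1) : ν ⟂ₘ ρ := by
  obtain ⟨lam, R₁, R₂, h₁, h₂, hR, -⟩ := exists_eq_add_add_mutuallySingular ν ρ
  rw [halfTvDist_eq_of_eq_add h₁ h₂ hR] at h
  have hlam : lam univ + R₁ univ = 0 + R₁ univ := by
    rw [← Measure.add_apply, ← h₁, measure_univ, h, zero_add]
  rw [h₁, h₂, Measure.measure_univ_eq_zero.1 ((ENNReal.add_left_inj (h ▸ one_ne_top)).1 hlam),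
    zero_add, zero_add]
  exact hR

end HalfTvDist

section Kernel

variable {α E F : Type*} [MeasurableSpace α] [MeasurableSpace E] [MeasurableSpace F]

lemma measurable_halfTvDist [MeasurableSpace.CountablyGenerated E] (κ η : Kernel α E)
    [IsMarkovKernel κ] [IsMarkovKernel η] : Measurable fun a => halfTvDist (κ a) (η a) := by
  have h : ∀ a, halfTvDist (κ a) (η a)
      = ∫⁻ z, κ.rnDeriv (κ + η) a z - η.rnDeriv (κ + η) a z ∂((κ + η) a) := fun a => by
    rw [halfTvDist_eq_lintegral_rnDeriv, add_apply]
    refine lintegral_congr_ae ?_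
    filter_upwards [Kernel.rnDeriv_eq_rnDeriv_measure (κ := κ) (η := κ + η) (a := a),
      Kernel.rnDeriv_eq_rnDeriv_measure (κ := η) (η := κ + η) (a := a)] with z h₁ h₂
    rw [h₁, h₂, add_apply]
  simp_rw [h]
  exact ((Kernel.measurable_rnDeriv _ _).sub
    (Kernel.measurable_rnDeriv _ _)).lintegral_kernel_prod_right

lemma comp_add_sub_comp_add_le (κ : Kernel E F) (lam R₁ R₂ : Measure E) (A : Set F) :
    (κ ∘ₘ (lam + R₁)) A - (κ ∘ₘ (lam + R₂)) A ≤ (κ ∘ₘ R₁) A - (κ ∘ₘ R₂) A := by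
  rw [Measure.comp_add, Measure.comp_add, Measure.add_apply, Measure.add_apply]
  exact add_tsub_add_le_tsub_left

lemma halfTvDist_comp_le (κ : Kernel E F) [IsMarkovKernel κ] (ν ρ : Measure E)
    [IsProbabilityMeasure ν] [IsProbabilityMeasure ρ] :
    halfTvDist (κ ∘ₘ ν) (κ ∘ₘ ρ) ≤ halfTvDist ν ρ := by
  obtain ⟨lam, R₁, R₂, h₁, h₂, hR, -⟩ := exists_eq_add_add_mutuallySingular ν ρ
  have hle : ∀ (R : Measure E) (A : Set F), (κ ∘ₘ R) A ≤ R univ := fun R A =>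
    (measure_mono (subset_univ A)).trans Measure.comp_apply_univ.le
  rw [halfTvDist_eq_of_eq_add h₁ h₂ hR, h₁, h₂]
  refine halfTvDist_le (fun A _ => ?_) (fun A _ => ?_)
  · exact (comp_add_sub_comp_add_le κ lam R₁ R₂ A).trans (tsub_le_self.trans (hle R₁ A))
  · rw [← measure_univ_eq_of_eq_add h₁ h₂]
    exact (comp_add_sub_comp_add_le κ lam R₂ R₁ A).trans (tsub_le_self.trans (hle R₂ A))

variable (κ : Kernel E F) (lam : Measure E) {R₁ R₂ : Measure E} [IsFiniteMeasure R₁]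
  [IsFiniteMeasure R₂] {s : ℝ≥0∞}

/-- Couple `κ ∘ₘ (lam + R₁)` and `κ ∘ₘ (lam + R₂)` by moving `lam` along the diagonal and the
residuals `R₁`, `R₂` independently. -/
lemma comp_add_sub_comp_add_mul_le (hs₁ : R₁ univ = s) (hs₂ : R₂ univ = s) {A : Set F}
    (hA : MeasurableSet A) :
    ((κ ∘ₘ (lam + R₁)) A - (κ ∘ₘ (lam + R₂)) A) * s
      ≤ ∫⁻ q, κ q.1 A - κ q.2 A ∂(R₁.prod R₂) := by
  have hκA : Measurable fun x => κ x A := κ.measurable_coe hA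
  have h₁ : ∫⁻ q, κ q.1 A ∂(R₁.prod R₂) = (κ ∘ₘ R₁) A * s := by
    rw [lintegral_prod (fun q : E × E => κ q.1 A) (hκA.comp measurable_fst).aemeasurable,
      Measure.bind_apply hA κ.aemeasurable, ← lintegral_mul_const _ hκA]
    simp only [lintegral_const, hs₂]
  have h₂ : ∫⁻ q, κ q.2 A ∂(R₁.prod R₂) = (κ ∘ₘ R₂) A * s := by
    rw [lintegral_prod (fun q : E × E => κ q.2 A) (hκA.comp measurable_snd).aemeasurable,
      Measure.bind_apply hA κ.aemeasurable]
    simp only [lintegral_const, hs₁, mul_comm]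
  calc ((κ ∘ₘ (lam + R₁)) A - (κ ∘ₘ (lam + R₂)) A) * s
      ≤ ((κ ∘ₘ R₁) A - (κ ∘ₘ R₂) A) * s :=
        mul_le_mul_left (comp_add_sub_comp_add_le κ lam R₁ R₂ A) s
    _ = (κ ∘ₘ R₁) A * s - (κ ∘ₘ R₂) A * s :=
        ENNReal.sub_mul fun _ _ => hs₁ ▸ measure_ne_top R₁ univ
    _ = ∫⁻ q, κ q.1 A ∂(R₁.prod R₂) - ∫⁻ q, κ q.2 A ∂(R₁.prod R₂) := by rw [h₁, h₂]
    _ ≤ ∫⁻ q, κ q.1 A - κ q.2 A ∂(R₁.prod R₂) := lintegral_sub_le _ _ (hκA.comp measurable_snd)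

lemma halfTvDist_comp_add_mul_le (hs₁ : R₁ univ = s) (hs₂ : R₂ univ = s) :
    halfTvDist (κ ∘ₘ (lam + R₁)) (κ ∘ₘ (lam + R₂)) * s
      ≤ ∫⁻ q, halfTvDist (κ q.1) (κ q.2) ∂(R₁.prod R₂) := by
  refine halfTvDist_mul_le (fun A hA => ?_) (fun A hA => ?_)
  · exact (comp_add_sub_comp_add_mul_le κ lam hs₁ hs₂ hA).trans
      (lintegral_mono fun q => measure_sub_le_halfTvDist hA)
  · calc _ ≤ ∫⁻ q, κ q.1 A - κ q.2 A ∂(R₂.prod R₁) :=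
          comp_add_sub_comp_add_mul_le κ lam hs₂ hs₁ hA
      _ ≤ ∫⁻ q, halfTvDist (κ q.2) (κ q.1) ∂(R₂.prod R₁) := lintegral_mono fun q => by
          rw [halfTvDist_comm]; exact measure_sub_le_halfTvDist hA
      _ = ∫⁻ q, halfTvDist (κ q.1) (κ q.2) ∂(R₁.prod R₂) :=
          lintegral_prod_swap fun q => halfTvDist (κ q.1) (κ q.2)

end Kernel

section Invariance

variable {α β γ δ : Type*} [MeasurableSpace α] [MeasurableSpace β] [MeasurableSpace γ]
  [MeasurableSpace δ]

lemma parallelComp_comp_prod_eq (κ : Kernel α β) (η : Kernel γ δ) [IsSFiniteKernel κ]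
    [IsSFiniteKernel η] (μ : Measure α) (ν : Measure γ) [SFinite μ] [SFinite ν] :
    (κ ∥ₖ η) ∘ₘ (μ.prod ν) = (κ ∘ₘ μ).prod (η ∘ₘ ν) := by
  have h : κ ∥ₖ η = (κ ∥ₖ Kernel.id) ∘ₖ (Kernel.id ∥ₖ η) := by
    rw [Kernel.parallelComp_comp_parallelComp, Kernel.comp_id, Kernel.id_comp]
  rw [h, ← Measure.comp_assoc, ← Measure.prod_comp_right, ← Measure.prod_comp_left]

lemma ae_lintegral_eq_of_le_lintegral {π : Measure α} {Q : Kernel α α} (hQ : Q ∘ₘ π = π)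
    {φ : α → ℝ≥0∞} (hφ : Measurable φ) (hfin : ∫⁻ a, φ a ∂π ≠ ∞)
    (hsub : ∀ᵐ a ∂π, φ a ≤ ∫⁻ b, φ b ∂Q a) : ∀ᵐ a ∂π, ∫⁻ b, φ b ∂Q a = φ a := by
  have hQφ : Measurable fun a => ∫⁻ b, φ b ∂Q a := hφ.lintegral_kernel
  have hzero : ∫⁻ a, (∫⁻ b, φ b ∂Q a) - φ a ∂π = 0 := by
    rw [lintegral_sub hφ hfin hsub, ← Measure.lintegral_bind Q.aemeasurable hφ.aemeasurable]
    change ∫⁻ a, φ a ∂(Q ∘ₘ π) - _ = 0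
    rw [hQ, tsub_self]
  filter_upwards [(lintegral_eq_zero_iff (hQφ.sub hφ)).1 hzero, hsub] with a ha ha'
  exact le_antisymm (tsub_eq_zero_iff_le.1 ha) ha'

end Invariance

section Variance

variable {α : Type*} [MeasurableSpace α]

lemma lintegral_ne_top_of_le_one (π : Measure α) [IsFiniteMeasure π] {φ : α → ℝ≥0∞}
    (h : ∀ a, φ a ≤ 1) : ∫⁻ a, φ a ∂π ≠ ∞ :=
  (IsFiniteMeasure.lintegral_lt_top_of_bounded_to_ennreal π ⟨1, by simpa using h⟩).ne

/-- `(x - c) ^ 2 + (c - x) ^ 2` plays the role of `|x - c| ^ 2`: one of the truncated differences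
vanishes. -/
lemma ENNReal.sq_add_sq_eq (x c : ℝ≥0∞) (hx : x ≠ ∞) (hc : c ≠ ∞) :
    x ^ 2 + c ^ 2 = ((x - c) ^ 2 + (c - x) ^ 2) + 2 * c * x := by
  rcases le_total x c with h | h
  · obtain ⟨d, rfl⟩ := exists_add_of_le h
    rw [tsub_eq_zero_of_le h, ENNReal.add_sub_cancel_left hx]
    ring
  · obtain ⟨d, rfl⟩ := exists_add_of_le h
    rw [tsub_eq_zero_of_le h, ENNReal.add_sub_cancel_left hc]
    ring

lemma lintegral_sq_eq (ν : Measure α) [IsProbabilityMeasure ν] {g : α → ℝ≥0∞}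
    (hg : Measurable g) (hg_top : ∀ a, g a ≠ ∞) (hfin : ∫⁻ a, g a ∂ν ≠ ∞) :
    ∫⁻ a, g a ^ 2 ∂ν = (∫⁻ a, g a ∂ν) ^ 2
      + ∫⁻ a, (g a - ∫⁻ b, g b ∂ν) ^ 2 + (∫⁻ b, g b ∂ν - g a) ^ 2 ∂ν := by
  set c := ∫⁻ b, g b ∂ν
  have h := lintegral_congr (μ := ν) fun a => ENNReal.sq_add_sq_eq (g a) c (hg_top a) hfin
  rw [lintegral_add_right _ measurable_const, lintegral_add_right _ (hg.const_mul _),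
    lintegral_const, measure_univ, mul_one, lintegral_const_mul _ hg] at h
  rw [← ENNReal.add_left_inj (pow_ne_top hfin), h]
  ring

variable (ν : Measure α) [IsProbabilityMeasure ν] {g : α → ℝ≥0∞} (hg : Measurable g)
  (hg_top : ∀ a, g a ≠ ∞) (hfin : ∫⁻ a, g a ∂ν ≠ ∞)
include hg hg_top hfin

lemma sq_lintegral_le_lintegral_sq : (∫⁻ a, g a ∂ν) ^ 2 ≤ ∫⁻ a, g a ^ 2 ∂ν := by
  rw [lintegral_sq_eq ν hg hg_top hfin]
  exact le_self_add

lemma ae_eq_lintegral_of_lintegral_sq_eq (h : ∫⁻ a, g a ^ 2 ∂ν = (∫⁻ a, g a ∂ν) ^ 2) :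
    ∀ᵐ a ∂ν, g a = ∫⁻ b, g b ∂ν := by
  set c := ∫⁻ b, g b ∂ν
  have h₀ : ∫⁻ a, (g a - c) ^ 2 + (c - g a) ^ 2 ∂ν = 0 := by
    rw [← ENNReal.add_right_inj (pow_ne_top hfin), ← lintegral_sq_eq ν hg hg_top hfin, h, add_zero]
  have hmeas : Measurable fun a => (g a - c) ^ 2 + (c - g a) ^ 2 := by fun_prop
  filter_upwards [(lintegral_eq_zero_iff hmeas).1 h₀] with a ha
  obtain ⟨h₁, h₂⟩ := add_eq_zero.1 ha
  exact le_antisymm (tsub_eq_zero_iff_le.1 (pow_eq_zero_iff two_ne_zero |>.1 h₁))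
    (tsub_eq_zero_iff_le.1 (pow_eq_zero_iff two_ne_zero |>.1 h₂))

end Variance

section Chain

variable {E : Type*} [MeasurableSpace E] (P : Kernel E E)

lemma nStep_comp_eq_of_comp_eq {μ : Measure E} (hμ : P ∘ₘ μ = μ) (n : ℕ) :
    nStep P n ∘ₘ μ = μ := by
  induction n with
  | zero => simp [nStep]
  | succ n ih => rw [nStep, ← Measure.comp_assoc, hμ, ih]

noncomputable def pairDist (n : ℕ) (p : E × E) : ℝ≥0∞ :=
  halfTvDist (nStep P n p.1) (nStep P n p.2)

noncomputable def limPairDist (p : E × E) : ℝ≥0∞ := ⨅ n, pairDist P n p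

lemma limPairDist_le_pairDist (n : ℕ) (p : E × E) : limPairDist P p ≤ pairDist P n p :=
  iInf_le _ n

lemma nStep_add (k l : ℕ) : nStep P (k + l) = nStep P l ∘ₖ nStep P k := by
  induction k with
  | zero => simp [nStep, Kernel.comp_id]
  | succ k ih => rw [Nat.add_right_comm, nStep, ih, nStep, Kernel.comp_assoc]

lemma nStep_add_apply (k l : ℕ) (x : E) : nStep P (k + l) x = nStep P l ∘ₘ nStep P k x := by
  rw [nStep_add, Kernel.comp_apply]

lemma nStep_one : nStep P 1 = P := by
  rw [nStep, nStep, Kernel.id_comp]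

variable [IsMarkovKernel P]

instance (n : ℕ) : IsMarkovKernel (nStep P n) := by
  induction n with
  | zero => rw [nStep]; infer_instance
  | succ n ih => rw [nStep]; infer_instance

lemma pairDist_le_one (n : ℕ) (p : E × E) : pairDist P n p ≤ 1 := halfTvDist_le_one _ _

lemma limPairDist_le_one (p : E × E) : limPairDist P p ≤ 1 :=
  (limPairDist_le_pairDist P 0 p).trans (pairDist_le_one P 0 p)

lemma antitone_pairDist (p : E × E) : Antitone fun n => pairDist P n p := by
  refine antitone_nat_of_succ_le fun n => ?_
  simp only [pairDist, nStep_add_apply P n 1, nStep_one]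
  exact halfTvDist_comp_le P _ _

lemma limPairDist_ne_top (p : E × E) : limPairDist P p ≠ ∞ :=
  ne_top_of_le_ne_top one_ne_top (limPairDist_le_one P p)

lemma tendsto_pairDist (p : E × E) :
    Tendsto (fun n => pairDist P n p) atTop (nhds (limPairDist P p)) :=
  tendsto_atTop_iInf (antitone_pairDist P p)

variable [MeasurableSpace.CountablyGenerated E]

lemma measurable_pairDist (n : ℕ) : Measurable (pairDist P n) :=
  measurable_halfTvDist ((nStep P n).comap Prod.fst measurable_fst)
    ((nStep P n).comap Prod.snd measurable_snd)

lemma measurable_limPairDist : Measurable (limPairDist P) :=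
  .iInf fun n => measurable_pairDist P n

lemma lintegral_limPairDist (π : Measure (E × E)) [IsFiniteMeasure π] :
    ∫⁻ q, limPairDist P q ∂π = ⨅ n, ∫⁻ q, pairDist P n q ∂π :=
  lintegral_iInf (measurable_pairDist P) (fun _ _ hmn q => antitone_pairDist P q hmn)
    (lintegral_ne_top_of_le_one π (pairDist_le_one P 0))

lemma limPairDist_mul_le (k : ℕ) (p : E × E) {lam R₁ R₂ : Measure E} [IsFiniteMeasure R₁]
    [IsFiniteMeasure R₂] {s : ℝ≥0∞} (h₁ : nStep P k p.1 = lam + R₁)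
    (h₂ : nStep P k p.2 = lam + R₂) (hs₁ : R₁ univ = s) (hs₂ : R₂ univ = s) :
    limPairDist P p * s ≤ ∫⁻ q, limPairDist P q ∂(R₁.prod R₂) := by
  rw [lintegral_limPairDist]
  refine le_iInf fun l => ?_
  calc limPairDist P p * s ≤ pairDist P (k + l) p * s :=
        mul_le_mul_left (limPairDist_le_pairDist P _ p) s
    _ ≤ ∫⁻ q, pairDist P l q ∂(R₁.prod R₂) := by
        rw [pairDist, nStep_add_apply, nStep_add_apply, h₁, h₂]
        exact halfTvDist_comp_add_mul_le (nStep P l) lam hs₁ hs₂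

lemma limPairDist_le_lintegral (k : ℕ) (p : E × E) :
    limPairDist P p ≤ ∫⁻ q, limPairDist P q ∂((nStep P k ∥ₖ nStep P k) p) := by
  simpa [Kernel.parallelComp_apply] using
    limPairDist_mul_le P k p (lam := 0) (zero_add _).symm (zero_add _).symm measure_univ
      measure_univ

lemma sq_limPairDist_le_lintegral (k : ℕ) (p : E × E) :
    limPairDist P p ^ 2 ≤ ∫⁻ q, limPairDist P q ^ 2 ∂((nStep P k ∥ₖ nStep P k) p) :=
  (pow_le_pow_left₀ zero_le (limPairDist_le_lintegral P k p) 2).trans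
    (sq_lintegral_le_lintegral_sq _ (measurable_limPairDist P) (limPairDist_ne_top P)
      (lintegral_ne_top_of_le_one _ (limPairDist_le_one P)))

lemma pairDist_eq_one_of_ae_limPairDist_eq (k : ℕ) (p : E × E)
    (hae : ∀ᵐ q ∂((nStep P k ∥ₖ nStep P k) p), limPairDist P q = limPairDist P p)
    (hd : limPairDist P p ≠ 0) : pairDist P k p = 1 := by
  obtain ⟨lam, R₁, R₂, h₁, h₂, hR, -⟩ :=
    exists_eq_add_add_mutuallySingular (nStep P k p.1) (nStep P k p.2)
  have hR₁ : R₁ ≤ nStep P k p.1 := h₁ ▸ Measure.le_add_left le_rfl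
  have hR₂ : R₂ ≤ nStep P k p.2 := h₂ ▸ Measure.le_add_left le_rfl
  have := isFiniteMeasure_of_le _ hR₁
  have := isFiniteMeasure_of_le _ hR₂
  set c := limPairDist P p
  set s := R₁ univ
  have hs : pairDist P k p = s := halfTvDist_eq_of_eq_add h₁ h₂ hR
  have hcs : c ≤ s := hs ▸ limPairDist_le_pairDist P k p
  have hs₁ : s ≤ 1 := hs ▸ pairDist_le_one P k p
  have hac : R₁.prod R₂ ≪ (nStep P k ∥ₖ nStep P k) p := by
    rw [Kernel.parallelComp_apply]
    exact (Measure.absolutelyContinuous_of_le hR₁).prod (Measure.absolutelyContinuous_of_le hR₂)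
  have key : c * s * 1 ≤ c * s * s :=
    calc c * s * 1 = c * s := mul_one _
      _ ≤ ∫⁻ q, limPairDist P q ∂(R₁.prod R₂) :=
          limPairDist_mul_le P k p h₁ h₂ rfl (measure_univ_eq_of_eq_add h₁ h₂)
      _ = c * s * s := by
          rw [lintegral_congr_ae (hac.ae_le hae), lintegral_const, ← univ_prod_univ,
            Measure.prod_prod, measure_univ_eq_of_eq_add h₁ h₂, mul_assoc]
  have hcs₀ : c * s ≠ 0 := mul_ne_zero hd (ne_bot_of_le_ne_bot hd hcs)
  have hcs_top : c * s ≠ ∞ :=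
    mul_ne_top (limPairDist_ne_top P p) (ne_top_of_le_ne_top one_ne_top hs₁)
  exact hs.trans (le_antisymm hs₁ ((ENNReal.mul_le_mul_iff_right hcs₀ hcs_top).1 key))

lemma ae_ae_limPairDist_eq {μ : Measure E} [IsProbabilityMeasure μ] (hμ : P ∘ₘ μ = μ) (k : ℕ) :
    ∀ᵐ p ∂(μ.prod μ), ∀ᵐ q ∂((nStep P k ∥ₖ nStep P k) p), limPairDist P q = limPairDist P p := by
  set Q := nStep P k ∥ₖ nStep P k
  have hQ : Q ∘ₘ μ.prod μ = μ.prod μ := by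
    rw [parallelComp_comp_prod_eq, nStep_comp_eq_of_comp_eq P hμ]
  have hd := measurable_limPairDist P
  have hd₁ := limPairDist_le_one P
  have hfin : ∀ p, ∫⁻ q, limPairDist P q ∂Q p ≠ ∞ := fun p => lintegral_ne_top_of_le_one _ hd₁
  have h₁ := ae_lintegral_eq_of_le_lintegral hQ hd (lintegral_ne_top_of_le_one _ hd₁)
    (ae_of_all _ (limPairDist_le_lintegral P k))
  have h₂ := ae_lintegral_eq_of_le_lintegral hQ (hd.pow_const 2)
    (lintegral_ne_top_of_le_one _ fun q => pow_le_one₀ zero_le (hd₁ q))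
    (ae_of_all _ (sq_limPairDist_le_lintegral P k))
  filter_upwards [h₁, h₂] with p hp₁ hp₂
  rw [← hp₁]
  exact ae_eq_lintegral_of_lintegral_sq_eq (Q p) hd (limPairDist_ne_top P) (hfin p)
    (by rw [hp₂, hp₁])

end Chain

theorem tv_dist_pairs_tendsto_zero_ae_general
    {E : Type*} [MeasurableSpace E] [MeasurableSpace.CountablyGenerated E]
    (P : ProbabilityTheory.Kernel E E) [IsMarkovKernel P]
    (μ : Measure E) [IsProbabilityMeasure μ]
    (hinv : ∀ A : Set E, MeasurableSet A → μ A = ∫⁻ x, P x A ∂μ)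
    (hns : ∀ᵐ p ∂(μ.prod μ), ∃ n : ℕ, ¬ nStep P n p.1 ⟂ₘ nStep P n p.2) :
    ∀ᵐ p ∂(μ.prod μ),
      Tendsto (fun n => tvDist (nStep P n p.1) (nStep P n p.2)) atTop (nhds 0) := by
  have hμ : P ∘ₘ μ = μ := by
    ext A hA
    rw [Measure.bind_apply hA P.aemeasurable, hinv A hA]
  filter_upwards [ae_all_iff.2 (ae_ae_limPairDist_eq P hμ), hns] with p hp ⟨n, hn⟩
  have hd : limPairDist P p = 0 := by
    by_contra hd
    exact hn (mutuallySingular_of_halfTvDist_eq_one _ _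
      (pairDist_eq_one_of_ae_limPairDist_eq P n p (hp n) hd))
  have h := ENNReal.Tendsto.const_mul (tendsto_pairDist P p) (Or.inr (ofNat_ne_top (n := 2)))
  rwa [hd, mul_zero] at h

/-- If the chain admits an invariant probability measure `μ` and for `μ ⊗ μ`-a.a. `(x,y)`
some `P_n(x,·)`, `P_n(y,·)` are non-singular, then `‖P_n(x₁,·) - P_n(x₂,·)‖ → 0` for
`μ ⊗ μ`-a.a. pairs `(x₁, x₂)`. -/
theorem tv_dist_pairs_tendsto_zero_ae
    {E : Type*} [MeasurableSpace E] [MeasurableSpace.CountablyGenerated E]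
    (hΔ : MeasurableSet {p : E × E | p.1 = p.2})
    (P : ProbabilityTheory.Kernel E E) [IsMarkovKernel P]
    (μ : Measure E) [IsProbabilityMeasure μ]
    (hinv : ∀ A : Set E, MeasurableSet A → μ A = ∫⁻ x, P x A ∂μ)
    (hns : ∀ᵐ p ∂(μ.prod μ), ∃ n : ℕ, ¬ nStep P n p.1 ⟂ₘ nStep P n p.2) :
    ∀ᵐ p ∂(μ.prod μ),
      Tendsto (fun n => tvDist (nStep P n p.1) (nStep P n p.2)) atTop (nhds 0) :=
  tv_dist_pairs_tendsto_zero_ae_general P μ hinv hns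
end
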